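/- arXiv:2601.13877 — 8 statements merged into one kernel-verified Lean document; each statement's English description precedes it below -/
import Mathlib

section
/- Every matrix U ∈ ℂ^{n×n} that is both unitary (UUᴴ = Iₙ) and symmetric (U = Uᵀ) admits a factorization U = QQᵀ for some unitary matrix Q ∈ ℂ^{n×n}. -/
/-!
A unitary `U` is normal with spectrum on the unit circle, so applying a square root `f` through
the continuous functional calculus gives a unitary `Q = f(U)` with `Q * Q = U`. The spectrum of a
matrix is finite, which makes any `f` continuous on it (the branch cut of `f` is harmless) and,
by Lagrange interpolation, makes `f(U)` a polynomial in `U`. A polynomial in a symmetric matrix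
is symmetric, hence `Q * Qᵀ = Q * Q = U`.
-/

open Matrix Polynomial
open scoped Matrix.Norms.L2Operator

theorem Matrix.transpose_aeval {R α n : Type*} [CommSemiring R] [CommSemiring α] [Algebra R α]
    [Fintype n] [DecidableEq n] (M : Matrix n n α) (q : R[X]) :
    (aeval M q)ᵀ = aeval Mᵀ q := by
  induction q using Polynomial.induction_on with
  | C r => simp [algebraMap_eq_diagonal]
  | add q₁ q₂ hq₁ hq₂ => simp [hq₁, hq₂]
  | monomial k r _ => simp [transpose_pow, Algebra.algebraMap_eq_smul_one]

theorem exists_cfc_eq_aeval_of_finite_spectrum {R A : Type*} {p : A → Prop} [Field R]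
    [StarRing R] [MetricSpace R] [IsTopologicalSemiring R] [ContinuousStar R] [Ring A]
    [StarRing A] [TopologicalSpace A] [Algebra R A] [ContinuousFunctionalCalculus R A p]
    (f : R → R) {a : A} (hfin : (spectrum R a).Finite) (ha : p a := by cfc_tac) :
    ∃ q : R[X], cfc f a = aeval a q := by
  classical
  refine ⟨Lagrange.interpolate hfin.toFinset id f, ?_⟩
  rw [← cfc_polynomial _ a]
  refine cfc_congr fun x hx => ?_
  exact (Lagrange.eval_interpolate_at_node f (Set.injOn_id _) (hfin.mem_toFinset.mpr hx)).symm

theorem Matrix.IsSymm.cfc {n : Type*} [Fintype n] [DecidableEq n] {M : Matrix n n ℂ}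
    (hM : M.IsSymm) (f : ℂ → ℂ) : (cfc f M).IsSymm := by
  by_cases hN : IsStarNormal M
  · obtain ⟨q, hq⟩ := exists_cfc_eq_aeval_of_finite_spectrum f M.finite_spectrum
    rw [IsSymm, hq, transpose_aeval, hM.eq]
  · rw [cfc_apply_of_not_predicate M hN]
    exact isSymm_zero

section SquareRoot

variable {A : Type*} [Ring A] [StarRing A] [TopologicalSpace A] [Algebra ℂ A]
  [ContinuousFunctionalCalculus ℂ A IsStarNormal]

theorem cfc_cpow_two_inv_mul_self {a : A} (hfin : (spectrum ℂ a).Finite)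
    (ha : IsStarNormal a := by cfc_tac) :
    cfc (fun z : ℂ => z ^ (2⁻¹ : ℂ)) a * cfc (fun z : ℂ => z ^ (2⁻¹ : ℂ)) a = a := by
  rw [← cfc_mul _ _ a (hfin.continuousOn _) (hfin.continuousOn _)]
  refine (cfc_congr fun x _ => ?_).trans (cfc_id' ℂ a)
  rw [← sq, Complex.cpow_ofNat_inv_pow]

theorem cfc_cpow_two_inv_mem_unitary {u : A} (hu : u ∈ unitary A)
    (hfin : (spectrum ℂ u).Finite) : cfc (fun z : ℂ => z ^ (2⁻¹ : ℂ)) u ∈ unitary A := by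
  have : IsStarNormal u := isStarNormal_of_mem_unitary hu
  rw [cfc_unitary_iff _ u (hf := hfin.continuousOn _)]
  intro x hx
  have hx_norm : ‖x‖ = 1 :=
    CStarRing.norm_of_mem_unitary (spectrum_subset_unitary_of_mem_unitary hu hx)
  have hsqrt : ‖x ^ (2⁻¹ : ℂ)‖ ^ 2 = 1 := by
    rw [← norm_pow, Complex.cpow_ofNat_inv_pow, hx_norm]
  rw [Complex.star_def, Complex.conj_mul']
  exact_mod_cast hsqrt

end SquareRoot

/-- Every unitary and symmetric matrix `U` factors as `U = Q * Qᵀ` with `Q` unitary. -/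
theorem unitary_symmetric_factorization {n : ℕ} (U : Matrix (Fin n) (Fin n) ℂ)
    (hU : U * Uᴴ = 1) (hUs : U = Uᵀ) :
    ∃ Q : Matrix (Fin n) (Fin n) ℂ, Q * Qᴴ = 1 ∧ U = Q * Qᵀ := by
  have hUu : U ∈ unitary (Matrix (Fin n) (Fin n) ℂ) := mem_unitaryGroup_iff.mpr hU
  refine ⟨cfc (fun z : ℂ => z ^ (2⁻¹ : ℂ)) U,
    mem_unitaryGroup_iff.mp (cfc_cpow_two_inv_mem_unitary hUu U.finite_spectrum), ?_⟩
  rw [(IsSymm.cfc hUs.symm _).eq,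
    cfc_cpow_two_inv_mul_self U.finite_spectrum (isStarNormal_of_mem_unitary hUu)]
end

section
/- Let A ∈ ℂ^{n×n} be complex symmetric (A = Aᵀ) with singular value decomposition A = F Σ Gᴴ, where F and G are unitary and Σ = diag(σ₁,…,σₙ) with σ₁ > σ₂ > … > σₙ ≥ 0 pairwise distinct. Then the unitary matrix Fᴴ G* is a diagonal matrix. -/
open Matrix

private lemma ct_swap {n : ℕ} (M : Matrix (Fin n) (Fin n) ℂ) : Mᴴᵀ = Mᵀᴴ := by
  ext i j
  simp [Matrix.conjTranspose_apply]

/-- If a complex symmetric matrix `A = Aᵀ` has an SVD `A = F * diagonal σ * Gᴴ`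
with pairwise distinct (strictly decreasing) nonnegative singular values,
then the unitary matrix `Fᴴ * G*` (with `G*` the entrywise conjugate) is diagonal. -/
theorem conj_factor_is_diagonal {n : ℕ} (A F G : Matrix (Fin n) (Fin n) ℂ) (σ : Fin n → ℝ)
    (hA : A = Aᵀ) (hF : F * Fᴴ = 1) (hG : G * Gᴴ = 1)
    (hσ : StrictAnti σ) (hσ0 : ∀ k, 0 ≤ σ k)
    (hSVD : A = F * Matrix.diagonal (fun k => (σ k : ℂ)) * Gᴴ) :
    (Fᴴ * G.map (starRingEnd ℂ)).IsDiag := by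
  have hmap : G.map (starRingEnd ℂ) = Gᵀᴴ := by
    ext i j
    simp [Matrix.conjTranspose_apply]
  rw [hmap]
  set S : Matrix (Fin n) (Fin n) ℂ := Matrix.diagonal (fun k => (σ k : ℂ)) with hS
  set W : Matrix (Fin n) (Fin n) ℂ := Fᴴ * Gᵀᴴ with hW
  have hFF : Fᴴ * F = 1 := mul_eq_one_comm.mp hF
  have hGG : Gᴴ * G = 1 := mul_eq_one_comm.mp hG
  have hFtF : Fᵀ * Fᵀᴴ = 1 := by
    have h := congrArg Matrix.transpose hFF
    rwa [Matrix.transpose_mul, Matrix.transpose_one, ct_swap F] at h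
  have hGtG : Gᵀ * Gᵀᴴ = 1 := by
    have h := congrArg Matrix.transpose hGG
    rwa [Matrix.transpose_mul, Matrix.transpose_one, ct_swap G] at h
  have hSt : Sᵀ = S := Matrix.diagonal_transpose _
  have hSh : Sᴴ = S := by
    have hv : star (fun k : Fin n => ((σ k : ℝ) : ℂ)) = fun k => ((σ k : ℝ) : ℂ) := by
      funext k
      exact Complex.conj_ofReal _
    rw [hS, Matrix.diagonal_conjTranspose, hv]
  have hWt : Wᵀ = Gᴴ * Fᵀᴴ := by
    rw [hW, Matrix.transpose_mul, ct_swap F, ct_swap Gᵀ, Matrix.transpose_transpose]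
  have cancelF : ∀ X : Matrix (Fin n) (Fin n) ℂ, Fᴴ * (F * X) = X := fun X => by
    rw [← Matrix.mul_assoc, hFF, Matrix.one_mul]
  have cancelG : ∀ X : Matrix (Fin n) (Fin n) ℂ, Gᴴ * (G * X) = X := fun X => by
    rw [← Matrix.mul_assoc, hGG, Matrix.one_mul]
  -- symmetry relation on the SVD
  have hsym : F * S * Gᴴ = Gᵀᴴ * S * Fᵀ := by
    have h1 : F * S * Gᴴ = (F * S * Gᴴ)ᵀ := by rw [← hSVD]; exact hA
    rwa [Matrix.transpose_mul, Matrix.transpose_mul, hSt, ct_swap G,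
      ← Matrix.mul_assoc] at h1
  -- Relation 1 : W * S = S * Wᵀ
  have R1 : W * S = S * Wᵀ := by
    rw [hW, hWt]
    have h := congrArg (fun M => Fᴴ * (M * Fᵀᴴ)) hsym
    simp only [Matrix.mul_assoc] at h
    simp only [cancelF, hFtF, Matrix.mul_one] at h
    simpa [Matrix.mul_assoc] using h.symm
  -- two expressions for Aᴴ
  have hAh : Aᴴ = G * (S * Fᴴ) := by
    rw [hSVD, Matrix.conjTranspose_mul, Matrix.conjTranspose_mul, hSh,
      Matrix.conjTranspose_conjTranspose]
  have hAc : Aᴴ = Fᵀᴴ * (S * Gᵀ) := by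
    rw [hSVD]
    have : F * S * Gᴴ = Gᵀᴴ * S * Fᵀ := hsym
    rw [this, Matrix.conjTranspose_mul, Matrix.conjTranspose_mul, hSh,
      Matrix.conjTranspose_conjTranspose]
  have hGF : G * (S * Fᴴ) = Fᵀᴴ * (S * Gᵀ) := hAh.symm.trans hAc
  -- Relation 2 (combined) : S * (S * W) = S * (Wᵀ * S)
  have key : F * (S * (Gᴴ * (G * (S * Fᴴ)))) = F * (S * (Gᴴ * (Fᵀᴴ * (S * Gᵀ)))) := by
    rw [hGF]
  simp only [cancelG] at key
  -- key : F * (S * (S * Fᴴ)) = F * (S * (Gᴴ * (Fᵀᴴ * (S * Gᵀ))))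
  have key2 := congrArg (fun M => Fᴴ * (M * Gᵀᴴ)) key
  simp only [Matrix.mul_assoc] at key2
  simp only [cancelF, hGtG, Matrix.mul_one] at key2
  -- key2 : S * (S * (Fᴴ * Gᵀᴴ)) = S * (Gᴴ * (Fᵀᴴ * S))
  have R2 : S * (S * W) = S * (Wᵀ * S) := by
    rw [hW, hWt]
    simpa [Matrix.mul_assoc] using key2
  have hcomm : S * (S * W) = W * (S * S) := by
    calc S * (S * W) = S * (Wᵀ * S) := R2
      _ = (S * Wᵀ) * S := by rw [Matrix.mul_assoc]
      _ = (W * S) * S := by rw [← R1]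
      _ = W * (S * S) := by rw [Matrix.mul_assoc]
  -- extract entries
  intro i j hij
  have hentry := congrFun (congrFun hcomm i) j
  have hSS : S * S = Matrix.diagonal (fun k => ((σ k : ℂ)) * (σ k : ℂ)) := by
    rw [hS, Matrix.diagonal_mul_diagonal]
  rw [hSS] at hentry
  rw [show S * W = Matrix.diagonal (fun k => (σ k : ℂ)) * W from by rw [hS]] at hentry
  rw [show S * (Matrix.diagonal (fun k => (σ k : ℂ)) * W)
      = Matrix.diagonal (fun k => ((σ k : ℂ)) * (σ k : ℂ)) * W from by
    rw [hS, ← Matrix.mul_assoc, Matrix.diagonal_mul_diagonal]] at hentry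
  rw [Matrix.diagonal_mul, Matrix.mul_diagonal] at hentry
  -- hentry : σ i * σ i * W i j = W i j * (σ j * σ j)
  have hne : ((σ i : ℂ)) * (σ i : ℂ) - ((σ j : ℂ)) * (σ j : ℂ) ≠ 0 := by
    intro hEq
    have hr : σ i * σ i = σ j * σ j := by
      have h' : ((σ i * σ i : ℝ) : ℂ) = ((σ j * σ j : ℝ) : ℂ) := by
        push_cast
        linear_combination hEq
      exact_mod_cast h'
    have hij' : σ i = σ j := by
      rcases mul_self_eq_mul_self_iff.mp hr with h | h
      · exact h
      · have := hσ0 i; have := hσ0 j; linarith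
    exact hij (hσ.injective hij')
  have hz : W i j * (((σ i : ℂ)) * (σ i : ℂ) - ((σ j : ℂ)) * (σ j : ℂ)) = 0 := by
    linear_combination hentry
  rcases mul_eq_zero.mp hz with h0 | h0
  · exact h0
  · exact absurd h0 hne
end

section
/- Let A ∈ ℂ^{n×n} be complex symmetric (A = Aᵀ) with singular value decomposition A = F Σ Gᴴ, where F and G are unitary and Σ is a real nonnegative diagonal matrix. If D ∈ ℂ^{n×n} is a diagonal matrix satisfying D² = Fᴴ G*, then the matrix Q := F D is unitary and A = Q Σ Qᵀ, i.e., Q provides a Takagi factorization of A. -/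
open Matrix

/-- From an SVD `A = F * diagonal σ * Gᴴ` of a complex symmetric matrix `A`, and a diagonal
matrix `D` with `D² = Fᴴ * G*`, the matrix `Q = F * D` is unitary and gives a Takagi
factorization `A = Q * diagonal σ * Qᵀ`. -/
theorem takagi_from_svd {n : ℕ} (A F G D : Matrix (Fin n) (Fin n) ℂ) (σ : Fin n → ℝ)
    (hA : A = Aᵀ) (hF : F * Fᴴ = 1) (hG : G * Gᴴ = 1) (hσ0 : ∀ k, 0 ≤ σ k)
    (hSVD : A = F * Matrix.diagonal (fun k => (σ k : ℂ)) * Gᴴ)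
    (hD : D.IsDiag) (hD2 : D * D = Fᴴ * G.map (starRingEnd ℂ)) :
    (F * D) * (F * D)ᴴ = 1 ∧
      A = (F * D) * Matrix.diagonal (fun k => (σ k : ℂ)) * (F * D)ᵀ := by
  set S : Matrix (Fin n) (Fin n) ℂ := Matrix.diagonal (fun k => (σ k : ℂ)) with hS
  set d : Fin n → ℂ := fun k => D k k with hd
  have hDd : D = Matrix.diagonal d := (hD.diagonal_diag).symm
  have hFhF : Fᴴ * F = 1 := mul_eq_one_comm.mp hF
  have hGt : (Gᴴ)ᵀ = G.map (starRingEnd ℂ) := by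
    ext i j; simp [conjTranspose_apply]
  have hGHc : (G.map (starRingEnd ℂ))ᴴ = Gᵀ := by
    ext i j; simp [conjTranspose_apply]
  have hGc : G.map (starRingEnd ℂ) * Gᵀ = 1 := by
    have h := congrArg (fun M => M.map (starRingEnd ℂ)) hG
    simp only [Matrix.map_mul] at h
    rw [show Gᴴ.map (starRingEnd ℂ) = Gᵀ from by ext i j; simp [conjTranspose_apply]] at h
    rwa [Matrix.map_one _ (map_zero _) (map_one _)] at h
  have h4 : (D * D) * (D * D)ᴴ = 1 := by
    rw [hD2, conjTranspose_mul, conjTranspose_conjTranspose, hGHc,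
      Matrix.mul_assoc, ← Matrix.mul_assoc (G.map (starRingEnd ℂ)), hGc, Matrix.one_mul, hFhF]
  have hnorm : ∀ k, d k * (starRingEnd ℂ) (d k) = 1 := by
    intro k
    have h1 : (d k * d k) * (starRingEnd ℂ) (d k) * (starRingEnd ℂ) (d k) = 1 := by
      have := congrArg (fun M => M k k) h4
      simpa [hDd, diagonal_mul_diagonal, diagonal_conjTranspose, Pi.star_def,
        diagonal_apply_eq, mul_assoc] using this
    have h2 : ((Complex.normSq (d k) : ℂ)) ^ 2 = 1 := by
      rw [← Complex.mul_conj]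
      linear_combination h1
    have h3 : (Complex.normSq (d k)) ^ 2 = 1 := by exact_mod_cast h2
    have h5 : Complex.normSq (d k) = 1 := by
      nlinarith [Complex.normSq_nonneg (d k)]
    rw [Complex.mul_conj, h5]; simp
  have hDDH : D * Dᴴ = 1 := by
    rw [hDd, diagonal_conjTranspose, diagonal_mul_diagonal]
    ext i j
    rcases eq_or_ne i j with rfl | hij
    · simpa [diagonal_apply_eq, Pi.star_def] using hnorm i
    · simp [diagonal_apply_ne _ hij, Matrix.one_apply_ne hij]
  constructor
  · rw [conjTranspose_mul, Matrix.mul_assoc, ← Matrix.mul_assoc D, hDDH, Matrix.one_mul, hF]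
  · have hDt : Dᵀ = D := by rw [hDd, diagonal_transpose]
    have hDSD : D * S * D = D * D * S := by
      rw [hDd, hS, diagonal_mul_diagonal, diagonal_mul_diagonal, diagonal_mul_diagonal,
        diagonal_mul_diagonal]
      exact congrArg Matrix.diagonal (funext fun k => by ring)
    calc A = Aᵀ := hA
      _ = (F * S * Gᴴ)ᵀ := by rw [← hSVD]
      _ = G.map (starRingEnd ℂ) * S * Fᵀ := by
          rw [transpose_mul, transpose_mul, hGt, hS, diagonal_transpose, Matrix.mul_assoc]
      _ = (F * D) * S * (F * D)ᵀ := by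
          rw [transpose_mul, hDt]
          symm
          calc F * D * S * (D * Fᵀ) = F * (D * S * D) * Fᵀ := by
                simp only [Matrix.mul_assoc]
            _ = F * (D * D * S) * Fᵀ := by rw [hDSD]
            _ = F * (Fᴴ * G.map (starRingEnd ℂ) * S) * Fᵀ := by rw [hD2]
            _ = (F * Fᴴ) * (G.map (starRingEnd ℂ) * S * Fᵀ) := by
                simp only [Matrix.mul_assoc]
            _ = G.map (starRingEnd ℂ) * S * Fᵀ := by
                rw [hF, Matrix.one_mul]
end

section
/- Let U ∈ ℂ^{n×n} be unitary and symmetric (UUᴴ = Iₙ and U = Uᵀ). Then the set {B ∈ ℂ^{n×n} : UᴴB + BᴴU = 0 and B = Bᵀ} equals the set {U·A : A ∈ ℂ^{n×n}, A + Aᴴ = 0, and U A Uᴴ = Aᵀ}. -/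
open Matrix

/-- For a unitary symmetric matrix `U`, the tangent space
`{B : UᴴB + BᴴU = 0, B = Bᵀ}` equals `{U*A : A skew-Hermitian, U A Uᴴ = Aᵀ}`. -/
theorem tangent_space_eq_skew_param {n : ℕ} (U : Matrix (Fin n) (Fin n) ℂ)
    (hU : U * Uᴴ = 1) (hUs : U = Uᵀ) :
    {B : Matrix (Fin n) (Fin n) ℂ | Uᴴ * B + Bᴴ * U = 0 ∧ B = Bᵀ} =
      {X : Matrix (Fin n) (Fin n) ℂ |
        ∃ A : Matrix (Fin n) (Fin n) ℂ, X = U * A ∧ A + Aᴴ = 0 ∧ U * A * Uᴴ = Aᵀ} := by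
  have hU' : Uᴴ * U = 1 := mul_eq_one_comm.mp hU
  have hUHt : (Uᴴ)ᵀ = Uᴴ :=
    congrArg transpose (congrArg conjTranspose hUs)
  ext B
  simp only [Set.mem_setOf_eq]
  constructor
  · rintro ⟨h1, h2⟩
    refine ⟨Uᴴ * B, ?_, ?_, ?_⟩
    · rw [← mul_assoc, hU, one_mul]
    · rw [conjTranspose_mul, conjTranspose_conjTranspose]; exact h1
    · rw [← mul_assoc, hU, one_mul, transpose_mul, hUHt, ← h2]
  · rintro ⟨A, rfl, h2, h3⟩
    constructor
    · rw [← mul_assoc, hU', one_mul, conjTranspose_mul, mul_assoc,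
        hU', mul_one]; exact h2
    · rw [transpose_mul, ← hUs, ← h3, mul_assoc, mul_assoc, hU', mul_one]
end

section
/- Let Q ∈ ℂ^{n×n} be unitary and set U = QQᵀ (so U is unitary and symmetric). Then the set {B ∈ ℂ^{n×n} : UᴴB + BᴴU = 0 and B = Bᵀ} equals the set {i·Q R Qᵀ : R ∈ ℝ^{n×n}, R = Rᵀ}, where a real matrix R is identified with its image in ℂ^{n×n}. -/
/-!
Every `B` is `Q M Qᵀ` for a unique `M`. Then `B` is symmetric iff `M` is, and with `U = Q Qᵀ`
the tangent equation `UᴴB + BᴴU = 0` becomes `Q̄ (M + Mᴴ) Qᵀ = 0`, i.e. `M` is skew-Hermitian.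
A symmetric skew-Hermitian matrix has purely imaginary entries, so it is `i R` with `R` real
symmetric.
-/

open Matrix

namespace Matrix

theorem transpose_mul_mul_transpose {n α : Type*} [Fintype n] [CommSemiring α]
    (Q M : Matrix n n α) : (Q * M * Qᵀ)ᵀ = Q * Mᵀ * Qᵀ := by
  simp [transpose_mul, Matrix.mul_assoc]

section Unitary

variable {n α : Type*} [Fintype n] [DecidableEq n] [CommRing α] [StarRing α]
  {Q : Matrix n n α} (hQ : Q ∈ unitaryGroup n α)
include hQ

theorem exists_eq_mul_mul_transpose (B : Matrix n n α) : ∃ M, B = Q * M * Qᵀ := by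
  have hQt : Qᵀ ∈ unitaryGroup n α := transpose_mem_unitaryGroup_iff.mpr hQ
  refine ⟨star Q * B * star Qᵀ, ?_⟩
  simp only [Matrix.mul_assoc, Unitary.star_mul_self_of_mem hQt, Matrix.mul_one]
  rw [← Matrix.mul_assoc, Unitary.mul_star_self_of_mem hQ, Matrix.one_mul]

theorem mul_mul_transpose_inj {M N : Matrix n n α} :
    Q * M * Qᵀ = Q * N * Qᵀ ↔ M = N := by
  rw [Unitary.mul_left_inj ⟨Qᵀ, transpose_mem_unitaryGroup_iff.mpr hQ⟩,
    Unitary.mul_right_inj ⟨Q, hQ⟩]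

theorem conjTranspose_mul_mul_self_eq_zero_iff {X : Matrix n n α} :
    Qᴴ * X * Q = 0 ↔ X = 0 := by
  rw [← star_eq_conjTranspose, (Unitary.isUnit_coe (U := ⟨Q, hQ⟩)).mul_left_eq_zero,
    (Unitary.isUnit_coe (U := ⟨star Q, Unitary.star_mem hQ⟩)).mul_right_eq_zero]

theorem tangent_condition_mul_mul_transpose (M : Matrix n n α) :
    (Q * Qᵀ)ᴴ * (Q * M * Qᵀ) + (Q * M * Qᵀ)ᴴ * (Q * Qᵀ) = Qᵀᴴ * (M + Mᴴ) * Qᵀ := by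
  have hQ' : Qᴴ * Q = 1 := Unitary.star_mul_self_of_mem hQ
  simp only [conjTranspose_mul, Matrix.mul_add, Matrix.add_mul, Matrix.mul_assoc,
    ← Matrix.mul_assoc Qᴴ Q, hQ', Matrix.one_mul]

end Unitary

theorem eq_transpose_and_add_conjTranspose_eq_zero_iff {n : Type*} {M : Matrix n n ℂ} :
    M = Mᵀ ∧ M + Mᴴ = 0 ↔
      ∃ R : Matrix n n ℝ, R = Rᵀ ∧ M = Complex.I • R.map Complex.ofReal := by
  constructor
  · rintro ⟨hsymm, hskew⟩
    refine ⟨M.map Complex.im, by rw [← transpose_map, ← hsymm], ?_⟩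
    ext i j
    have hre : (M i j).re = 0 := by
      have hji : M j i = M i j := congr_fun₂ hsymm.symm i j
      have := congr_fun₂ hskew i j
      rw [add_apply, conjTranspose_apply, hji, Complex.star_def, Complex.add_conj] at this
      simpa using this
    apply Complex.ext <;> simp [hre]
  · rintro ⟨R, hR, rfl⟩
    constructor
    · rw [transpose_smul, ← transpose_map, ← hR]
    · ext i j
      simp [congr_fun₂ hR i j]

end Matrix

/-- For `U = Q * Qᵀ` with `Q` unitary, the tangent space
`{B : UᴴB + BᴴU = 0, B = Bᵀ}` equals `{i • Q R Qᵀ : R real symmetric}`. -/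
theorem tangent_space_eq_real_symmetric_param {n : ℕ} (Q : Matrix (Fin n) (Fin n) ℂ)
    (hQ : Q * Qᴴ = 1) :
    {B : Matrix (Fin n) (Fin n) ℂ |
        (Q * Qᵀ)ᴴ * B + Bᴴ * (Q * Qᵀ) = 0 ∧ B = Bᵀ} =
      {X : Matrix (Fin n) (Fin n) ℂ |
        ∃ R : Matrix (Fin n) (Fin n) ℝ, R = Rᵀ ∧
          X = Complex.I • (Q * R.map (Complex.ofReal) * Qᵀ)} := by
  have hU : Q ∈ unitaryGroup (Fin n) ℂ := mem_unitaryGroup_iff.mpr hQ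
  ext B
  obtain ⟨M, rfl⟩ := exists_eq_mul_mul_transpose hU B
  have smul_mul_mul_transpose (R : Matrix (Fin n) (Fin n) ℂ) :
      Complex.I • (Q * R * Qᵀ) = Q * (Complex.I • R) * Qᵀ := by
    rw [Matrix.mul_smul, Matrix.smul_mul]
  simp only [Set.mem_ofPred_eq, tangent_condition_mul_mul_transpose hU,
    conjTranspose_mul_mul_self_eq_zero_iff (transpose_mem_unitaryGroup_iff.mpr hU),
    transpose_mul_mul_transpose, mul_mul_transpose_inj hU, smul_mul_mul_transpose]
  rw [and_comm]
  exact eq_transpose_and_add_conjTranspose_eq_zero_iff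
end

section
/- Let U ∈ ℂ^{n×n} be unitary and symmetric (UUᴴ = Iₙ, U = Uᵀ), and let B ∈ ℂ^{n×n} satisfy UᴴB + BᴴU = 0 and B = Bᵀ. Then the matrix V := U · exp(UᴴB) (matrix exponential) is again unitary and symmetric, i.e., VVᴴ = Iₙ and V = Vᵀ. In particular, the geodesic U(μ) = U·exp(μ·UᴴB) remains in the set of unitary symmetric matrices for all real μ. -/
open Matrix

namespace Matrix

variable {m 𝔸 : Type*} [Fintype m] [DecidableEq m]

theorem exp_mem_unitaryGroup_of_conjTranspose_eq_neg [RCLike 𝔸] {A : Matrix m m 𝔸}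
    (hA : Aᴴ = -A) : NormedSpace.exp A ∈ unitaryGroup m 𝔸 := by
  rw [mem_unitaryGroup_iff, star_eq_conjTranspose, ← exp_conjTranspose, hA,
    ← exp_add_of_commute _ _ (Commute.refl A).neg_right, add_neg_cancel, NormedSpace.exp_zero]

/-- The symmetry of `U * A` says `Aᵀ = U * A * U⁻¹`, so `(exp A)ᵀ = exp Aᵀ = U * exp A * U⁻¹`. -/
theorem IsSymm.mul_exp [NormedCommRing 𝔸] [NormedAlgebra ℚ 𝔸] [CompleteSpace 𝔸]
    {U A : Matrix m m 𝔸} (hUunit : IsUnit U) (hU : U.IsSymm) (hUA : (U * A).IsSymm) :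
    (U * NormedSpace.exp A).IsSymm := by
  have hconj : Aᵀ = U * A * U⁻¹ := by
    rw [← hUA.eq, transpose_mul, hU.eq, mul_nonsing_inv_cancel_right _ _
      ((isUnit_iff_isUnit_det U).mp hUunit)]
  rw [IsSymm, transpose_mul, hU.eq, ← exp_transpose, hconj, exp_conj _ _ hUunit,
    nonsing_inv_mul_cancel_right _ _ ((isUnit_iff_isUnit_det U).mp hUunit)]

end Matrix

/-- If `U` is unitary symmetric and `B` lies in the tangent space at `U`
(`UᴴB + BᴴU = 0`, `B = Bᵀ`), then `U * exp(UᴴB)` is unitary and symmetric, and so is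
every point `U * exp(μ • UᴴB)` of the geodesic, for all real `μ`. -/
theorem geodesic_stays_in_manifold {n : ℕ} (U B : Matrix (Fin n) (Fin n) ℂ)
    (hU : U * Uᴴ = 1) (hUs : U = Uᵀ)
    (hB1 : Uᴴ * B + Bᴴ * U = 0) (hB2 : B = Bᵀ) :
    ((U * NormedSpace.exp (Uᴴ * B)) * (U * NormedSpace.exp (Uᴴ * B))ᴴ = 1 ∧
      U * NormedSpace.exp (Uᴴ * B) = (U * NormedSpace.exp (Uᴴ * B))ᵀ) ∧
    ∀ μ : ℝ,
      (U * NormedSpace.exp (μ • (Uᴴ * B))) * (U * NormedSpace.exp (μ • (Uᴴ * B)))ᴴ = 1 ∧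
      U * NormedSpace.exp (μ • (Uᴴ * B)) = (U * NormedSpace.exp (μ • (Uᴴ * B)))ᵀ := by
  have hUunitary : U ∈ unitaryGroup (Fin n) ℂ := mem_unitaryGroup_iff.mpr hU
  have stays {A : Matrix (Fin n) (Fin n) ℂ} (hA : Aᴴ = -A) (hUA : (U * A).IsSymm) :
      (U * NormedSpace.exp A) * (U * NormedSpace.exp A)ᴴ = 1 ∧
        U * NormedSpace.exp A = (U * NormedSpace.exp A)ᵀ :=
    ⟨mem_unitaryGroup_iff.mp
        (mul_mem hUunitary (exp_mem_unitaryGroup_of_conjTranspose_eq_neg hA)),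
      (IsSymm.mul_exp (Unitary.isUnit_coe (U := ⟨U, hUunitary⟩)) hUs.symm hUA).symm⟩
  have hskew : (Uᴴ * B)ᴴ = -(Uᴴ * B) := by
    rw [conjTranspose_mul, conjTranspose_conjTranspose, eq_neg_of_add_eq_zero_right hB1]
  have hsymm : (U * (Uᴴ * B)).IsSymm := by
    rw [← mul_assoc, hU, one_mul]
    exact hB2.symm
  refine ⟨stays hskew hsymm, fun μ => stays ?_ ?_⟩
  · rw [conjTranspose_smul, hskew, star_trivial, smul_neg]
  · rw [Matrix.mul_smul]
    exact hsymm.smul μ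
end

section
/- Let A ∈ ℂ^{n×n} have singular value decomposition A = F Σ Gᴴ with F, G unitary and Σ real nonnegative diagonal. Then FGᴴ is a closest unitary matrix to A in Frobenius norm: for every unitary W ∈ ℂ^{n×n}, ‖A − FGᴴ‖_F ≤ ‖A − W‖_F. -/
open Matrix

/-- The Frobenius norm of a complex square matrix. -/
noncomputable def frobNorm {n : ℕ} (M : Matrix (Fin n) (Fin n) ℂ) : ℝ :=
  Real.sqrt (∑ k, ∑ l, ‖M k l‖ ^ 2)

/-!
Both `A - F * Gᴴ` and `A - W` are of the form `F * (D - U) * Gᴴ` with `D = diagonal σ`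
and `U` unitary (`U = 1`, resp. `U = Fᴴ * W * G`), and the Frobenius norm is invariant
under multiplication by unitaries. Row `k` of `D - U` is `σ k • eₖ - uₖ` with `eₖ`, `uₖ`
unit vectors, and by the reverse triangle inequality its norm is at least `|σ k - 1|`,
the norm of row `k` of `D - 1`.
-/

theorem norm_smul_sub_self_le_norm_smul_sub {E : Type*} [SeminormedAddCommGroup E]
    [NormedSpace ℝ E] {e u : E} (he : ‖e‖ = 1) (hu : ‖u‖ = 1) {t : ℝ} (ht : 0 ≤ t) :
    ‖t • e - e‖ ≤ ‖t • e - u‖ :=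
  calc ‖t • e - e‖ = |‖t • e‖ - ‖u‖| := by
        rw [show t • e - e = (t - 1) • e by rw [sub_smul, one_smul], norm_smul, norm_smul,
          he, hu, mul_one, mul_one, Real.norm_eq_abs, Real.norm_eq_abs, abs_of_nonneg ht]
    _ ≤ ‖t • e - u‖ := abs_norm_sub_norm_le _ _

theorem Matrix.ofReal_norm_toLp_row_sq {𝕜 m n : Type*} [RCLike 𝕜] [Fintype n]
    (M : Matrix m n 𝕜) (k : m) :
    ((‖WithLp.toLp 2 (M k)‖ ^ 2 : ℝ) : 𝕜) = (M * Mᴴ) k k := by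
  simp only [EuclideanSpace.norm_sq_eq, mul_apply, conjTranspose_apply, ← starRingEnd_apply,
    RCLike.mul_conj]
  push_cast
  rfl

theorem Matrix.norm_toLp_row_of_mem_unitaryGroup {𝕜 n : Type*} [RCLike 𝕜] [Fintype n]
    [DecidableEq n] {U : Matrix n n 𝕜} (hU : U ∈ unitaryGroup n 𝕜) (k : n) :
    ‖WithLp.toLp 2 (U k)‖ = 1 := by
  have h := ofReal_norm_toLp_row_sq U k
  rw [← star_eq_conjTranspose, Unitary.mul_star_self_of_mem hU, one_apply_eq] at h
  exact (pow_eq_one_iff_of_nonneg (norm_nonneg _) two_ne_zero).mp (by exact_mod_cast h)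

section FrobeniusNorm

variable {n : ℕ}

theorem frobNorm_nonneg (M : Matrix (Fin n) (Fin n) ℂ) : 0 ≤ frobNorm M :=
  Real.sqrt_nonneg _

theorem frobNorm_sq (M : Matrix (Fin n) (Fin n) ℂ) :
    frobNorm M ^ 2 = ∑ k, ‖WithLp.toLp 2 (M k)‖ ^ 2 := by
  rw [frobNorm, Real.sq_sqrt (by positivity)]
  simp only [EuclideanSpace.norm_sq_eq]

theorem ofReal_frobNorm_sq (M : Matrix (Fin n) (Fin n) ℂ) :
    ((frobNorm M ^ 2 : ℝ) : ℂ) = trace (M * Mᴴ) := by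
  rw [frobNorm_sq, Complex.ofReal_sum]
  exact Finset.sum_congr rfl fun k _ => ofReal_norm_toLp_row_sq M k

theorem frobNorm_mul_mul_of_mem_unitaryGroup {P Q : Matrix (Fin n) (Fin n) ℂ}
    (hP : P ∈ unitaryGroup (Fin n) ℂ) (hQ : Q ∈ unitaryGroup (Fin n) ℂ)
    (M : Matrix (Fin n) (Fin n) ℂ) : frobNorm (P * M * Q) = frobNorm M := by
  have hconj : P * M * Q * (P * M * Q)ᴴ = P * (M * Mᴴ) * star P := by
    rw [conjTranspose_mul, conjTranspose_mul, ← star_eq_conjTranspose Q,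
      ← star_eq_conjTranspose P]
    simp only [Matrix.mul_assoc]
    rw [← Matrix.mul_assoc Q, Unitary.mul_star_self_of_mem hQ, Matrix.one_mul]
  have htrace : trace (P * M * Q * (P * M * Q)ᴴ) = trace (M * Mᴴ) := by
    rw [hconj, trace_mul_comm, ← Matrix.mul_assoc, Unitary.star_mul_self_of_mem hP,
      Matrix.one_mul]
  have hsq : frobNorm (P * M * Q) ^ 2 = frobNorm M ^ 2 := by
    exact_mod_cast (ofReal_frobNorm_sq _).trans (htrace.trans (ofReal_frobNorm_sq M).symm)
  exact (sq_eq_sq₀ (frobNorm_nonneg _) (frobNorm_nonneg _)).mp hsq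

theorem frobNorm_diagonal_sub_one_le {σ : Fin n → ℝ} (hσ : ∀ k, 0 ≤ σ k)
    {U : Matrix (Fin n) (Fin n) ℂ} (hU : U ∈ unitaryGroup (Fin n) ℂ) :
    frobNorm (diagonal (fun k => (σ k : ℂ)) - 1) ≤
      frobNorm (diagonal (fun k => (σ k : ℂ)) - U) := by
  have hrow : ∀ (V : Matrix (Fin n) (Fin n) ℂ) k,
      WithLp.toLp 2 ((diagonal (fun k => (σ k : ℂ)) - V) k)
        = σ k • WithLp.toLp 2 ((1 : Matrix (Fin n) (Fin n) ℂ) k) - WithLp.toLp 2 (V k) := by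
    intro V k
    ext l
    rcases eq_or_ne k l with rfl | hkl <;> simp [*, diagonal_apply_ne, one_apply_ne]
  rw [← sq_le_sq₀ (frobNorm_nonneg _) (frobNorm_nonneg _), frobNorm_sq, frobNorm_sq]
  gcongr with k
  rw [hrow, hrow]
  exact norm_smul_sub_self_le_norm_smul_sub (norm_toLp_row_of_mem_unitaryGroup (one_mem _) k)
    (norm_toLp_row_of_mem_unitaryGroup hU k) (hσ k)

end FrobeniusNorm

/-- If `A = F * diagonal σ * Gᴴ` is an SVD, then `F * Gᴴ` is a closest unitary matrix
to `A` in Frobenius norm. -/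
theorem closest_unitary {n : ℕ} (A F G : Matrix (Fin n) (Fin n) ℂ) (σ : Fin n → ℝ)
    (hF : F * Fᴴ = 1) (hG : G * Gᴴ = 1) (hσ0 : ∀ k, 0 ≤ σ k)
    (hSVD : A = F * Matrix.diagonal (fun k => (σ k : ℂ)) * Gᴴ) :
    ∀ W : Matrix (Fin n) (Fin n) ℂ, W * Wᴴ = 1 →
      frobNorm (A - F * Gᴴ) ≤ frobNorm (A - W) := by
  intro W hW
  have hFu : F ∈ unitaryGroup (Fin n) ℂ := mem_unitaryGroup_iff.mpr hF
  have hGu : G ∈ unitaryGroup (Fin n) ℂ := mem_unitaryGroup_iff.mpr hG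
  have hGu' : Gᴴ ∈ unitaryGroup (Fin n) ℂ := Unitary.star_mem hGu
  have hU : Fᴴ * W * G ∈ unitaryGroup (Fin n) ℂ :=
    mul_mem (mul_mem (Unitary.star_mem hFu) (mem_unitaryGroup_iff.mpr hW)) hGu
  set D := diagonal fun k => (σ k : ℂ)
  have hA₁ : A - F * Gᴴ = F * (D - 1) * Gᴴ := by
    rw [hSVD]; noncomm_ring
  have hA₂ : A - W = F * (D - Fᴴ * W * G) * Gᴴ := by
    rw [hSVD, mul_sub, sub_mul, ← Matrix.mul_assoc, ← Matrix.mul_assoc, hF, Matrix.one_mul,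
      Matrix.mul_assoc W, hG, Matrix.mul_one]
  rw [hA₁, hA₂, frobNorm_mul_mul_of_mem_unitaryGroup hFu hGu',
    frobNorm_mul_mul_of_mem_unitaryGroup hFu hGu']
  exact frobNorm_diagonal_sub_one_le hσ0 hU
end

section
/- Let A ∈ ℂ^{n×n} be complex symmetric (A = Aᵀ) with Takagi factorization A = Q Σ Qᵀ, where Q is unitary and Σ is real nonnegative diagonal. Then QQᵀ is a closest unitary symmetric matrix to A in Frobenius norm: for every matrix U' ∈ ℂ^{n×n} with U'U'ᴴ = Iₙ and U' = U'ᵀ, one has ‖A − QQᵀ‖_F ≤ ‖A − U'‖_F. -/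
/-!
The map `X ↦ Q * X * Qᵀ` is a Frobenius isometry, and every unitary `U'` can be written as
`Q * B * Qᵀ` with `B` unitary, so it suffices to show `‖Σ - 1‖_F ≤ ‖Σ - B‖_F` for unitary `B`.
Expanding, `‖Σ - B‖_F² = ‖Σ‖_F² + n - 2 ∑ₖ σₖ Re Bₖₖ`, and `Re Bₖₖ ≤ |Bₖₖ| ≤ 1` because the rows
of `B` are unit vectors; since `σₖ ≥ 0`, the minimum is attained at `B = 1`.
-/

open Matrix

section FrobNormSq

variable {𝕜 m n : Type*} [RCLike 𝕜] [Fintype m] [Fintype n]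

noncomputable def frobNormSq (M : Matrix m n 𝕜) : ℝ :=
  ∑ i, ∑ j, ‖M i j‖ ^ 2

theorem frobNorm_eq_sqrt_frobNormSq {k : ℕ} (M : Matrix (Fin k) (Fin k) ℂ) :
    frobNorm M = √(frobNormSq M) :=
  rfl

theorem frobNormSq_eq_re_trace (M : Matrix m n 𝕜) :
    frobNormSq M = RCLike.re (Mᴴ * M).trace := by
  simp only [frobNormSq, trace, diag, mul_apply, conjTranspose_apply, map_sum,
    RCLike.star_def, RCLike.conj_mul, ← RCLike.ofReal_pow, RCLike.ofReal_re]
  exact Finset.sum_comm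

variable [DecidableEq m] [DecidableEq n]

theorem frobNormSq_of_mem_unitaryGroup {U : Matrix m m 𝕜} (hU : U ∈ unitaryGroup m 𝕜) :
    frobNormSq U = Fintype.card m := by
  rw [frobNormSq_eq_re_trace, ← star_eq_conjTranspose, mem_unitaryGroup_iff'.mp hU]
  simp

theorem frobNormSq_unitary_mul_mul_unitary {U : Matrix m m 𝕜} {V : Matrix n n 𝕜}
    (hU : U ∈ unitaryGroup m 𝕜) (hV : V ∈ unitaryGroup n 𝕜) (M : Matrix m n 𝕜) :
    frobNormSq (U * M * V) = frobNormSq M := by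
  have hUU : Uᴴ * U = 1 := mem_unitaryGroup_iff'.mp hU
  have hVV : V * Vᴴ = 1 := mem_unitaryGroup_iff.mp hV
  have hconj : (U * M * V)ᴴ * (U * M * V) = Vᴴ * (Mᴴ * M) * V := by
    simp only [conjTranspose_mul, Matrix.mul_assoc]
    rw [← Matrix.mul_assoc Uᴴ U, hUU, Matrix.one_mul]
  rw [frobNormSq_eq_re_trace, frobNormSq_eq_re_trace, hconj, trace_mul_cycle,
    ← Matrix.mul_assoc, hVV, Matrix.one_mul]

theorem frobNormSq_diagonal_sub (σ : m → ℝ) (B : Matrix m m 𝕜) :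
    frobNormSq (diagonal (fun k => (σ k : 𝕜)) - B)
      = ∑ k, σ k ^ 2 + frobNormSq B - 2 * ∑ k, σ k * RCLike.re (B k k) := by
  have hentry : ∀ k l, ‖(diagonal (fun k => (σ k : 𝕜)) - B) k l‖ ^ 2
      = ‖B k l‖ ^ 2 + if k = l then σ k ^ 2 - 2 * σ k * RCLike.re (B k k) else 0 := by
    intro k l
    rcases eq_or_ne k l with rfl | hkl
    · rw [Matrix.sub_apply, diagonal_apply_eq, if_pos rfl, norm_sub_sq (𝕜 := 𝕜)]
      simp only [norm_algebraMap', Real.norm_eq_abs, sq_abs, RCLike.inner_apply, RCLike.conj_ofReal,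
        RCLike.mul_re, RCLike.ofReal_re, RCLike.ofReal_im, mul_zero, sub_zero]
      ring
    · simp [hkl]
  simp only [frobNormSq, hentry, Finset.sum_add_distrib, Finset.sum_ite_eq, Finset.mem_univ,
    if_true, Finset.sum_sub_distrib, Finset.mul_sum, mul_assoc]
  ring

theorem frobNormSq_diagonal_sub_one_le {σ : m → ℝ} (hσ : ∀ k, 0 ≤ σ k) {B : Matrix m m 𝕜}
    (hB : B ∈ unitaryGroup m 𝕜) :
    frobNormSq (diagonal (fun k => (σ k : 𝕜)) - 1)
      ≤ frobNormSq (diagonal (fun k => (σ k : 𝕜)) - B) := by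
  have hre : ∀ k, RCLike.re (B k k) ≤ 1 := fun k =>
    (RCLike.re_le_norm _).trans (entry_norm_bound_of_unitary hB k k)
  rw [frobNormSq_diagonal_sub, frobNormSq_diagonal_sub,
    frobNormSq_of_mem_unitaryGroup (one_mem _), frobNormSq_of_mem_unitaryGroup hB]
  have hsum : ∑ k, σ k * RCLike.re (B k k) ≤ ∑ k, σ k * RCLike.re ((1 : Matrix m m 𝕜) k k) :=
    Finset.sum_le_sum fun k _ => by simpa using mul_le_mul_of_nonneg_left (hre k) (hσ k)
  linarith

end FrobNormSq

theorem closest_unitary_symmetric_general {n : ℕ} (A Q : Matrix (Fin n) (Fin n) ℂ) (σ : Fin n → ℝ)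
    (hQ : Q * Qᴴ = 1) (hσ0 : ∀ k, 0 ≤ σ k)
    (hTakagi : A = Q * Matrix.diagonal (fun k => (σ k : ℂ)) * Qᵀ) :
    ∀ U' : Matrix (Fin n) (Fin n) ℂ, U' * U'ᴴ = 1 → U' = U'ᵀ →
      frobNorm (A - Q * Qᵀ) ≤ frobNorm (A - U') := by
  intro U' hU' _
  have hQu : Q ∈ unitaryGroup (Fin n) ℂ := mem_unitaryGroup_iff.mpr hQ
  have hQTu : Qᵀ ∈ unitaryGroup (Fin n) ℂ := transpose_mem_unitaryGroup_iff.mpr hQu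
  set D := diagonal (fun k => (σ k : ℂ))
  set B := Qᴴ * U' * Qᴴᵀ
  have hB : B ∈ unitaryGroup (Fin n) ℂ :=
    mul_mem (mul_mem (Unitary.star_mem hQu) (mem_unitaryGroup_iff.mpr hU'))
      (transpose_mem_unitaryGroup_iff.mpr (Unitary.star_mem hQu))
  have hQTQ : Qᴴᵀ * Qᵀ = 1 := by rw [← transpose_mul, hQ, transpose_one]
  have hU'B : U' = Q * B * Qᵀ := by
    calc U' = (Q * Qᴴ) * U' * (Qᴴᵀ * Qᵀ) := by rw [hQ, hQTQ, Matrix.one_mul, Matrix.mul_one]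
      _ = Q * B * Qᵀ := by simp only [B, Matrix.mul_assoc]
  have hres1 : A - Q * Qᵀ = Q * (D - 1) * Qᵀ := by rw [hTakagi]; noncomm_ring
  have hres2 : A - U' = Q * (D - B) * Qᵀ := by rw [hTakagi, hU'B]; noncomm_ring
  rw [frobNorm_eq_sqrt_frobNormSq, frobNorm_eq_sqrt_frobNormSq, hres1, hres2,
    frobNormSq_unitary_mul_mul_unitary hQu hQTu, frobNormSq_unitary_mul_mul_unitary hQu hQTu]
  exact Real.sqrt_le_sqrt (frobNormSq_diagonal_sub_one_le hσ0 hB)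

/-- If `A = Q * diagonal σ * Qᵀ` is a Takagi factorization of the symmetric matrix `A`,
then `Q * Qᵀ` is a closest unitary symmetric matrix to `A` in Frobenius norm. -/
theorem closest_unitary_symmetric {n : ℕ} (A Q : Matrix (Fin n) (Fin n) ℂ) (σ : Fin n → ℝ)
    (hA : A = Aᵀ) (hQ : Q * Qᴴ = 1) (hσ0 : ∀ k, 0 ≤ σ k)
    (hTakagi : A = Q * Matrix.diagonal (fun k => (σ k : ℂ)) * Qᵀ) :
    ∀ U' : Matrix (Fin n) (Fin n) ℂ, U' * U'ᴴ = 1 → U' = U'ᵀ →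
      frobNorm (A - Q * Qᵀ) ≤ frobNorm (A - U') :=
  closest_unitary_symmetric_general A Q σ hQ hσ0 hTakagi
end
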